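/- arXiv:1309.0458 — 3 statements merged into one kernel-verified Lean document; each statement's English description precedes it below -/
import Mathlib

section
/- There is an absolute constant C such that the following holds. Let F be any family of bijections f : {0,1}^n → {0,1}^n such that f(x) ≠ x for all x ∈ {0,1}^n, and let ε ∈ (0,1). If k is an integer with 1 ≤ k ≤ n − log log(4 · 2^n · |F|) − 2 log(1/ε) − C (logs base 2), then there exists a coding scheme with block length n and message length k such that for every f ∈ F and every s ∈ {0,1}^k, Pr[Dec(f(Enc(s))) ≠ ⊥] ≤ ε. In particular, such a scheme is non-malleable with respect to F with error ε, taking D_f to be the point distribution on ⊥. -/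
/-!
Pick the decoder at random: every word of `{0,1}^n` independently receives a uniform tag in
`{0,1}^r` and a uniform message, is valid iff its tag is zero, and then decodes to its message;
`Enc(s)` is uniform on the codewords of `s`. A message has about `m = 2^(n-k-r)` codewords, and
for a fixed-point-free bijection `f` the number of codewords `x` of `s` with `f x` valid has mean
`m / 2^r ≤ ε m / 64`. After 3-colouring the words so that `x` and `f x` never share a colour, this
count splits into three sums of independent indicators, so Chernoff bounds (joined by convexity
of `exp`) and a union bound over `F` and the messages leave a decoder under which `f (Enc s)` is
valid with probability at most `ε`; then `D_f = ⊥` witnesses non-malleability. The union bound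
needs `ε m / 8 ≥ log₂ (4 · 2^n · |F|)`, which for `2^r ≈ 64 / ε` is the hypothesis on `k`.
-/

open Finset

/-- Bit strings of length `n`, i.e. `{0,1}^n`. -/
abbrev Word (n : ℕ) := Fin n → Bool

/-- Messages of length `k`, i.e. `{0,1}^k`. -/
abbrev Msg (k : ℕ) := Fin k → Bool

/-- Values in `{0,1}^k ∪ {⊥, same}`: `none` = `same`, `some none` = `⊥`,
`some (some s)` = the message `s`. -/
abbrev NMVal (k : ℕ) := Option (Option (Msg k))

/-- `copy x s = s` if `x = same`, and `copy x s = x` otherwise. -/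
def copyFn {k : ℕ} (x : NMVal k) (s : Msg k) : Option (Msg k) := x.getD (some s)

/-- Statistical (total variation) distance between two mass functions on a finite set. -/
noncomputable def statDist {α : Type*} [Fintype α] (P Q : α → ℝ) : ℝ :=
  (∑ x, |P x - Q x|) / 2

/-- A probability mass function on a finite set. -/
def IsDist {α : Type*} [Fintype α] (D : α → ℝ) : Prop :=
  (∀ a, 0 ≤ D a) ∧ ∑ a, D a = 1

/-- A coding scheme with block length `n` and message length `k`: a randomized
encoder `enc` (given as the probability mass function of `Enc(s)`) and a
deterministic decoder `dec` (`none` = `⊥`) such that `Dec(Enc(s)) = s` always. -/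
structure CodingScheme (n k : ℕ) where
  enc : Msg k → Word n → ℝ
  dec : Word n → Option (Msg k)
  enc_nonneg : ∀ s x, 0 ≤ enc s x
  enc_sum : ∀ s, ∑ x, enc s x = 1
  dec_enc : ∀ s x, 0 < enc s x → dec x = some s

/-- The distribution of `Dec(f(Enc(s)))`. -/
noncomputable def decDist {n k : ℕ} (C : CodingScheme n k)
    (f : Word n → Word n) (s : Msg k) : Option (Msg k) → ℝ :=
  fun y => ∑ x, if C.dec (f x) = y then C.enc s x else 0

/-- The distribution of `copy(S', s)` for `S' ~ D`. -/
noncomputable def copyDist {k : ℕ} (D : NMVal k → ℝ) (s : Msg k) : Option (Msg k) → ℝ :=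
  fun y => ∑ v, if copyFn v s = y then D v else 0

/-- The distribution `D_{f,s}` of the random variable that equals `same` if
`f(Enc(s)) = Enc(s)` and `Dec(f(Enc(s)))` otherwise. -/
noncomputable def tamperDist {n k : ℕ} (C : CodingScheme n k)
    (f : Word n → Word n) (s : Msg k) : NMVal k → ℝ :=
  fun v => ∑ x, if (if f x = x then (none : NMVal k) else some (C.dec (f x))) = v
    then C.enc s x else 0

/-- Non-malleability of a coding scheme w.r.t. a family `F` with error `ε`. -/
def NonMalleable {n k : ℕ} (C : CodingScheme n k)
    (F : Set (Word n → Word n)) (ε : ℝ) : Prop :=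
  ∀ f ∈ F, ∃ D : NMVal k → ℝ, IsDist D ∧
    ∀ s : Msg k, statDist (decDist C f s) (copyDist D s) ≤ ε

/-- Strong non-malleability of a coding scheme w.r.t. a family `F` with error `ε`. -/
def StronglyNonMalleable {n k : ℕ} (C : CodingScheme n k)
    (F : Set (Word n → Word n)) (ε : ℝ) : Prop :=
  ∀ f ∈ F, ∀ s₁ s₂ : Msg k, s₁ ≠ s₂ →
    statDist (tamperDist C f s₁) (tamperDist C f s₂) ≤ ε

/-- Hamming weight of a word. -/
def hammingWt {n : ℕ} (x : Word n) : ℕ := (univ.filter (fun i => x i = true)).card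

/-- The coding scheme has relative distance `δ`: any offset of a codeword by a
nonzero `Δ` of Hamming weight at most `δn` is rejected by the decoder. -/
def HasRelDist {n k : ℕ} (C : CodingScheme n k) (δ : ℝ) : Prop :=
  ∀ s x, 0 < C.enc s x → ∀ Δ : Word n, Δ ≠ (fun _ => false) →
    (hammingWt Δ : ℝ) ≤ δ * n → C.dec (fun i => xor (x i) (Δ i)) = none

/-- The binary entropy function (logs base 2). -/
noncomputable def binEnt (δ : ℝ) : ℝ :=
  -(δ * Real.logb 2 δ) - (1 - δ) * Real.logb 2 (1 - δ)

open Finset Function Real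
open scoped BigOperators

section RandomFunction

variable {ι β κ : Type*} [Fintype ι] [DecidableEq ι] [Fintype β] [Nonempty β]

theorem expect_comp_eval (x : ι) (ψ : β → ℝ) : 𝔼 ω : ι → β, ψ (ω x) = 𝔼 b, ψ b := by
  rw [Fintype.expect_equiv (Equiv.funSplitAt x β) (fun ω => ψ (ω x)) (fun p => ψ p.1)
    fun ω => rfl, ← univ_product_univ, expect_product' univ univ fun b _ => ψ b]
  simp

theorem expect_mul_of_dependsOn_compl {F G : (ι → β) → ℝ} {s : Set ι} [DecidablePred (· ∈ s)]
    (hF : DependsOn F s) (hG : DependsOn G sᶜ) :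
    𝔼 ω, F ω * G ω = (𝔼 ω, F ω) * 𝔼 ω, G ω := by
  let e := Equiv.piEquivPiSubtypeProd (· ∈ s) fun _ : ι => β
  obtain ⟨ω₀⟩ := (inferInstance : Nonempty (ι → β))
  let F' a := F (e.symm (a, fun i => ω₀ i))
  let G' b := G (e.symm (fun i => ω₀ i, b))
  have hF' : ∀ ω, F ω = F' (e ω).1 := fun ω => hF fun i hi => by simp [e, hi]
  have hG' : ∀ ω, G ω = G' (e ω).2 := fun ω => hG fun i hi => by simp_all [e]
  rw [Fintype.expect_equiv e _ (fun p => F' p.1 * G' p.2) fun ω => by rw [← hF', ← hG'],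
    Fintype.expect_equiv e F (fun p => F' p.1) hF', Fintype.expect_equiv e G (fun p => G' p.2) hG',
    ← univ_product_univ, expect_product' univ univ fun a b => F' a * G' b,
    expect_product' univ univ fun a _ => F' a, expect_product' univ univ fun _ b => G' b]
  simp only [Fintype.expect_const, Fintype.expect_mul_expect]

theorem expect_prod_of_dependsOn (S : Finset κ) {B : κ → Set ι} {φ : κ → (ι → β) → ℝ}
    (hB : (S : Set κ).PairwiseDisjoint B) (hφ : ∀ i ∈ S, DependsOn (φ i) (B i)) :
    𝔼 ω, ∏ i ∈ S, φ i ω = ∏ i ∈ S, 𝔼 ω, φ i ω := by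
  classical
  induction S using Finset.induction with
  | empty => simp
  | insert a S ha ih =>
    have hrest : DependsOn (fun ω => ∏ i ∈ S, φ i ω) (B a)ᶜ := fun ω₁ ω₂ h =>
      prod_congr rfl fun i hi => hφ i (mem_insert_of_mem hi) fun x hx => h x fun hxa =>
        Set.disjoint_left.mp (hB (mem_insert_self a S) (mem_insert_of_mem hi)
          (ne_of_mem_of_not_mem hi ha).symm) hxa hx
    simp only [prod_insert ha]
    rw [expect_mul_of_dependsOn_compl (hφ a (mem_insert_self a S)) hrest,
      ih (hB.subset (by simp)) fun i hi => hφ i (mem_insert_of_mem hi)]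

theorem expect_exp_sum_le (S : Finset κ) {B : κ → Set ι} {Y : κ → (ι → β) → ℝ}
    (hB : (S : Set κ).PairwiseDisjoint B) (hY : ∀ i ∈ S, DependsOn (Y i) (B i))
    (hY01 : ∀ i ∈ S, ∀ ω, Y i ω = 0 ∨ Y i ω = 1) (t : ℝ) :
    𝔼 ω, exp (t * ∑ i ∈ S, Y i ω) ≤ exp ((exp t - 1) * ∑ i ∈ S, 𝔼 ω, Y i ω) := by
  have hlin : ∀ i ∈ S, ∀ ω, exp (t * Y i ω) = 1 + (exp t - 1) * Y i ω := fun i hi ω => by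
    rcases hY01 i hi ω with h | h <;> simp [h]
  have hfactor : ∀ i ∈ S, 𝔼 ω, exp (t * Y i ω) ≤ exp ((exp t - 1) * 𝔼 ω, Y i ω) := fun i hi => by
    rw [expect_congr rfl fun ω _ => hlin i hi ω, expect_add_distrib, Fintype.expect_const,
      ← mul_expect]
    linarith [add_one_le_exp ((exp t - 1) * 𝔼 ω, Y i ω)]
  calc 𝔼 ω, exp (t * ∑ i ∈ S, Y i ω) = 𝔼 ω, ∏ i ∈ S, exp (t * Y i ω) := by
        simp only [mul_sum, exp_sum]
    _ = ∏ i ∈ S, 𝔼 ω, exp (t * Y i ω) :=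
        expect_prod_of_dependsOn S hB fun i hi ω₁ ω₂ h => by rw [hY i hi h]
    _ ≤ ∏ i ∈ S, exp ((exp t - 1) * 𝔼 ω, Y i ω) :=
        prod_le_prod (fun i _ => expect_nonneg fun ω _ => (exp_pos _).le) hfactor
    _ = exp ((exp t - 1) * ∑ i ∈ S, 𝔼 ω, Y i ω) := by rw [mul_sum, exp_sum]

end RandomFunction

section UnionBound

variable {Ω κ : Type*} [Fintype Ω]

theorem expect_boole_ge_le_exp_mul_expect_exp (X : Ω → ℝ) {t : ℝ} (ht : 0 ≤ t) (T : ℝ) :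
    𝔼 ω, (if T ≤ X ω then 1 else 0 : ℝ) ≤ exp (-(t * T)) * 𝔼 ω, exp (t * X ω) := by
  rw [mul_expect]
  refine expect_le_expect fun ω _ => ?_
  rw [← exp_add]
  split_ifs with h
  · exact one_le_exp (by nlinarith)
  · exact (exp_pos _).le

theorem exists_forall_not_of_card_mul_lt_one [Nonempty Ω] (E : Finset κ) (bad : κ → Ω → Prop)
    [∀ e ω, Decidable (bad e ω)] {p : ℝ}
    (hp : ∀ e ∈ E, 𝔼 ω, (if bad e ω then 1 else 0 : ℝ) ≤ p) (hE : #E * p < 1) :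
    ∃ ω, ∀ e ∈ E, ¬ bad e ω := by
  have hsum : 𝔼 ω, ∑ e ∈ E, (if bad e ω then 1 else 0 : ℝ) < 1 := by
    rw [expect_sum_comm]
    calc _ ≤ ∑ _e ∈ E, p := sum_le_sum hp
      _ < 1 := by simpa using hE
  obtain ⟨ω, -, hω⟩ := exists_lt_of_expect_lt univ_nonempty hsum
  refine ⟨ω, fun e he hbad => hω.not_ge ?_⟩
  calc (1 : ℝ) = if bad e ω then 1 else 0 := by simp [hbad]
    _ ≤ ∑ e ∈ E, (if bad e ω then 1 else 0 : ℝ) :=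
        single_le_sum (f := fun e => if bad e ω then (1 : ℝ) else 0) (fun e _ => by positivity) he

end UnionBound

theorem exists_fin_three_coloring_of_bijective {α : Type*} [Fintype α] [DecidableEq α]
    {f : α → α} (hf : Bijective f) (hfix : ∀ x, f x ≠ x) :
    ∃ c : α → Fin 3, ∀ x, c (f x) ≠ c x := by
  let g := Equiv.ofBijective f hf
  suffices ∀ s : Finset α, ∃ c : α → Fin 3, ∀ x ∈ s, f x ∈ s → c (f x) ≠ c x by
    obtain ⟨c, hc⟩ := this univ
    exact ⟨c, fun x => hc x (mem_univ x) (mem_univ (f x))⟩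
  intro s
  induction s using Finset.induction with
  | empty => exact ⟨fun _ => 0, by simp⟩
  | insert a s ha ih =>
    obtain ⟨c, hc⟩ := ih
    -- `a` has two neighbours, `f a` and `f⁻¹ a`, so one of three colours is free for it
    have hfree : ∀ u v : Fin 3, ∃ col, col ≠ u ∧ col ≠ v := by decide
    obtain ⟨col, hcol₁, hcol₂⟩ := hfree (c (f a)) (c (g.symm a))
    refine ⟨update c a col, fun x hx hfx => ?_⟩
    by_cases hxa : x = a
    · subst hxa
      simpa [hfix x] using hcol₁.symm
    by_cases hfxa : f x = a
    · rw [show g.symm a = x from g.symm_apply_eq.mpr hfxa.symm] at hcol₂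
      simpa [hfxa, hxa] using hcol₂
    · simpa [hxa, hfxa] using
        hc x ((mem_insert.mp hx).resolve_left hxa) ((mem_insert.mp hfx).resolve_left hfxa)

def tamperCount {α M : Type*} [DecidableEq M] [Fintype α] (dec : α → Option M) (f : α → α)
    (s : M) : ℕ :=
  #{x | dec x = some s ∧ dec (f x) ≠ none}

section RandomCode

variable {α R M : Type*} [Fintype R] [DecidableEq R] [Inhabited R] [Fintype M]

/-- A uniformly random table `ω : α → R × M` gives the random decoder `decodeSymbol ∘ ω`: a word
is valid with probability `1 / |R|`, and a valid word decodes to a uniformly random message. -/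
def decodeSymbol (b : R × M) : Option M := if b.1 = default then some b.2 else none

theorem expect_boole_decodeSymbol_eq_some [DecidableEq M] (s : M) :
    𝔼 b : R × M, (if decodeSymbol b = some s then 1 else 0 : ℝ)
      = 1 / (Fintype.card R * Fintype.card M) := by
  have : ∀ b : R × M, decodeSymbol b = some s ↔ b = (default, s) := fun b => by
    unfold decodeSymbol; split_ifs <;> simp_all [Prod.ext_iff]
  simp [this]

theorem expect_boole_decodeSymbol_ne_none [Nonempty M] :
    𝔼 b : R × M, (if decodeSymbol b ≠ none then 1 else 0 : ℝ) = 1 / Fintype.card R := by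
  have : ∀ b : R × M, decodeSymbol b ≠ none ↔ b.1 = default := fun b => by
    unfold decodeSymbol; split_ifs <;> simp_all
  simp only [this]
  rw [← univ_product_univ, Finset.expect_product' univ univ
    fun r (_ : M) => (if r = default then 1 else 0 : ℝ)]
  simp

variable [Fintype α] [DecidableEq α] [DecidableEq M] [Nonempty M]

theorem expect_boole_tampered {f : α → α} {x : α} (hx : f x ≠ x) (s : M) :
    𝔼 ω : α → R × M,
      (if decodeSymbol (ω x) = some s ∧ decodeSymbol (ω (f x)) ≠ none then 1 else 0 : ℝ)
      = 1 / (Fintype.card R ^ 2 * Fintype.card M) := by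
  classical
  have hF : DependsOn (fun ω : α → R × M => if decodeSymbol (ω x) = some s then (1 : ℝ) else 0)
      {x} := fun ω₁ ω₂ h => by dsimp only; rw [h x rfl]
  have hG : DependsOn (fun ω : α → R × M => if decodeSymbol (ω (f x)) ≠ none then (1 : ℝ) else 0)
      {x}ᶜ := fun ω₁ ω₂ h => by dsimp only; rw [h (f x) hx]
  have hmul : ∀ ω : α → R × M,
      (if decodeSymbol (ω x) = some s ∧ decodeSymbol (ω (f x)) ≠ none then 1 else 0 : ℝ)
        = (if decodeSymbol (ω x) = some s then 1 else 0)
          * (if decodeSymbol (ω (f x)) ≠ none then 1 else 0) := fun ω => by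
    rw [ite_zero_mul_ite_zero, one_mul]
  rw [expect_congr rfl fun ω _ => hmul ω, expect_mul_of_dependsOn_compl hF hG,
    expect_comp_eval x fun b => if decodeSymbol b = some s then 1 else 0,
    expect_comp_eval (f x) fun b => if decodeSymbol b ≠ none then 1 else 0,
    expect_boole_decodeSymbol_eq_some, expect_boole_decodeSymbol_ne_none]
  field_simp

theorem expect_exp_sum_tampered_le {f : α → α} (hf : Injective f) (hfix : ∀ x, f x ≠ x)
    {S : Finset α} (hS : ∀ x ∈ S, f x ∉ S) (s : M) :
    𝔼 ω : α → R × M, exp (∑ x ∈ S,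
      (if decodeSymbol (ω x) = some s ∧ decodeSymbol (ω (f x)) ≠ none then 1 else 0 : ℝ))
      ≤ exp ((exp 1 - 1) * (Fintype.card α / (Fintype.card R ^ 2 * Fintype.card M))) := by
  have hB : (S : Set α).PairwiseDisjoint fun x => ({x, f x} : Set α) := fun x hx y hy hxy => by
    refine Set.disjoint_left.mpr fun z hzx hzy => ?_
    rcases hzx with rfl | rfl <;> rcases hzy with h | h
    · exact hxy h
    · exact hS y hy (h ▸ hx)
    · exact hS x hx (h ▸ hy)
    · exact hxy (hf h)
  have hsum := expect_exp_sum_le S hB (β := R × M) (Y := fun x ω =>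
      if decodeSymbol (ω x) = some s ∧ decodeSymbol (ω (f x)) ≠ none then 1 else 0)
    (fun x _ ω₁ ω₂ h => by
      simp only [h x (by simp), h (f x) (by simp)])
    (fun x _ ω => by split_ifs <;> simp) 1
  simp only [one_mul, expect_boole_tampered (hfix _), sum_const, nsmul_eq_mul] at hsum
  refine hsum.trans (exp_le_exp.mpr (mul_le_mul_of_nonneg_left ?_ ?_))
  · rw [mul_one_div]
    gcongr
    exact_mod_cast card_le_univ S
  · linarith [add_one_le_exp 1]

theorem expect_exp_tamperCount_div_three_le {f : α → α} (hf : Bijective f)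
    (hfix : ∀ x, f x ≠ x) (s : M) :
    𝔼 ω : α → R × M, exp (tamperCount (decodeSymbol ∘ ω) f s / 3)
      ≤ exp ((exp 1 - 1) * (Fintype.card α / (Fintype.card R ^ 2 * Fintype.card M))) := by
  obtain ⟨c, hc⟩ := exists_fin_three_coloring_of_bijective hf hfix
  set Y : α → (α → R × M) → ℝ := fun x ω =>
    if decodeSymbol (ω x) = some s ∧ decodeSymbol (ω (f x)) ≠ none then 1 else 0
  -- split the count along the colour classes, which carry no pair `(x, f x)`, and use convexity
  have hjensen : ∀ ω, exp (tamperCount (decodeSymbol ∘ ω) f s / 3)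
      ≤ 1 / 3 * ∑ i, exp (∑ x with c x = i, Y x ω) := fun ω => by
    have hcount : (tamperCount (decodeSymbol ∘ ω) f s : ℝ) = ∑ i, ∑ x with c x = i, Y x ω := by
      rw [sum_fiberwise, tamperCount, natCast_card_filter]; rfl
    have := convexOn_exp.map_sum_le (t := univ) (w := fun _ : Fin 3 => (1 / 3 : ℝ))
      (p := fun i => ∑ x with c x = i, Y x ω) (by simp) (by simp) (by simp)
    simp only [smul_eq_mul, ← mul_sum] at this
    rwa [hcount, div_eq_inv_mul, ← one_div]
  have hclass : ∀ i, 𝔼 ω, exp (∑ x with c x = i, Y x ω)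
      ≤ exp ((exp 1 - 1) * (Fintype.card α / (Fintype.card R ^ 2 * Fintype.card M))) := fun i =>
    expect_exp_sum_tampered_le hf.injective hfix (fun x hx hfx => hc x <| by
      rw [(mem_filter.mp hx).2, (mem_filter.mp hfx).2]) s
  calc 𝔼 ω, exp (tamperCount (decodeSymbol ∘ ω) f s / 3)
      ≤ 𝔼 ω, 1 / 3 * ∑ i, exp (∑ x with c x = i, Y x ω) := expect_le_expect fun ω _ => hjensen ω
    _ = 1 / 3 * ∑ i, 𝔼 ω, exp (∑ x with c x = i, Y x ω) := by
        rw [← mul_expect, expect_sum_comm]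
    _ ≤ 1 / 3 * ∑ _i : Fin 3,
          exp ((exp 1 - 1) * (Fintype.card α / (Fintype.card R ^ 2 * Fintype.card M))) := by
        gcongr with i; exact hclass i
    _ = _ := by simp

theorem expect_boole_tamperCount_ge_le {f : α → α} (hf : Bijective f) (hfix : ∀ x, f x ≠ x)
    (s : M) (T : ℝ) :
    𝔼 ω : α → R × M, (if T ≤ tamperCount (decodeSymbol ∘ ω) f s then 1 else 0 : ℝ)
      ≤ exp ((exp 1 - 1) * (Fintype.card α / (Fintype.card R ^ 2 * Fintype.card M)) - T / 3) := by
  have hmgf := expect_exp_tamperCount_div_three_le (R := R) hf hfix s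
  calc _ ≤ exp (-(3⁻¹ * T)) * 𝔼 ω : α → R × M, exp (3⁻¹ * tamperCount (decodeSymbol ∘ ω) f s) :=
        expect_boole_ge_le_exp_mul_expect_exp _ (by norm_num) T
    _ ≤ exp (-(3⁻¹ * T))
          * exp ((exp 1 - 1) * (Fintype.card α / (Fintype.card R ^ 2 * Fintype.card M))) := by
        simp only [← div_eq_inv_mul] at hmgf ⊢
        gcongr
    _ = _ := by rw [← exp_add]; ring_nf

theorem expect_boole_tamperCount_ge_half_le {f : α → α} (hf : Bijective f)
    (hfix : ∀ x, f x ≠ x) (s : M) {ε : ℝ} (hε : 0 ≤ ε) (hR : 64 ≤ ε * Fintype.card R) :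
    𝔼 ω : α → R × M, (if ε * (Fintype.card α / (Fintype.card R * Fintype.card M)) / 2
        ≤ tamperCount (decodeSymbol ∘ ω) f s then 1 else 0 : ℝ)
      ≤ exp (-(ε * (Fintype.card α / (Fintype.card R * Fintype.card M))) / 8) := by
  set m : ℝ := Fintype.card α / (Fintype.card R * Fintype.card M)
  have hm : 0 ≤ m := by positivity
  have hR0 : (0 : ℝ) < Fintype.card R := by nlinarith
  have hμ : (Fintype.card α / (Fintype.card R ^ 2 * Fintype.card M) : ℝ) = m / Fintype.card R := by
    simp only [m]; field_simp
  have hμε : m / Fintype.card R ≤ ε * m / 64 := by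
    rw [div_le_iff₀ hR0]; nlinarith
  have he : (exp 1 - 1) * (m / Fintype.card R) ≤ 2 * (ε * m / 64) :=
    mul_le_mul (by linarith [exp_one_lt_d9]) hμε (by positivity) (by norm_num)
  refine (expect_boole_tamperCount_ge_le hf hfix s (ε * m / 2)).trans (exp_le_exp.mpr ?_)
  rw [hμ]
  nlinarith [mul_nonneg hε hm]

theorem expect_boole_card_decodeSymbol_eq_some_le_le (s : M) (T : ℝ) :
    𝔼 ω : α → R × M, (if (#{x | decodeSymbol (ω x) = some s} : ℝ) ≤ T then 1 else 0 : ℝ)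
      ≤ exp (T - (1 - exp (-1)) * (Fintype.card α / (Fintype.card R * Fintype.card M))) := by
  set Y : α → (α → R × M) → ℝ := fun x ω => if decodeSymbol (ω x) = some s then 1 else 0
  have hY : ∀ x, 𝔼 ω, Y x ω = 1 / (Fintype.card R * Fintype.card M) := fun x => by
    rw [expect_comp_eval x fun b => if decodeSymbol b = some s then 1 else 0,
      expect_boole_decodeSymbol_eq_some]
  have hmgf := expect_exp_sum_le univ (B := fun x => ({x} : Set α)) (Y := Y)
    (fun x _ y _ hxy => Set.disjoint_singleton.mpr hxy)
    (fun x _ ω₁ ω₂ h => by simp only [Y, h x rfl]) (fun x _ ω => by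
      simp only [Y]; split_ifs <;> simp)
    (-1)
  simp only [hY, sum_const, card_univ, nsmul_eq_mul] at hmgf
  calc _ ≤ exp (-(1 * -T))
          * 𝔼 ω : α → R × M, exp (1 * -(#{x | decodeSymbol (ω x) = some s} : ℝ)) :=
        le_of_eq_of_le (by simp only [neg_le_neg_iff])
          (expect_boole_ge_le_exp_mul_expect_exp _ zero_le_one _)
    _ ≤ exp T
          * exp ((exp (-1) - 1) * (Fintype.card α * (1 / (Fintype.card R * Fintype.card M)))) := by
        simp only [natCast_card_filter, one_mul, neg_neg, neg_one_mul] at *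
        gcongr
    _ = _ := by rw [← exp_add]; ring_nf

variable (R) in
theorem exists_decoder_tamperCount_le
    (F : Finset (α → α)) (hF : ∀ f ∈ F, Bijective f ∧ ∀ x, f x ≠ x) {ε : ℝ} (hε : 0 < ε)
    (hε1 : ε ≤ 1) (hR : 64 ≤ ε * Fintype.card R)
    (hunion : (#F + 1) * Fintype.card M
      * exp (-(ε * (Fintype.card α / (Fintype.card R * Fintype.card M))) / 8) < 1) :
    ∃ dec : α → Option M, ∀ s, (∃ x, dec x = some s) ∧
      ∀ f ∈ F, (tamperCount dec f s : ℝ) ≤ ε * #{x | dec x = some s} := by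
  classical
  set m : ℝ := Fintype.card α / (Fintype.card R * Fintype.card M)
  have hm : 0 ≤ m := by positivity
  -- `(none, s)`: `s` has few codewords; `(some f, s)`: `f` often makes codewords of `s` valid
  let bad : Option (α → α) × M → (α → R × M) → Prop := fun e ω =>
    e.1.elim ((#{x | decodeSymbol (ω x) = some e.2} : ℝ) ≤ m / 2)
      fun f => ε * m / 2 ≤ tamperCount (decodeSymbol ∘ ω) f e.2
  have hbad : ∀ e ∈ F.insertNone ×ˢ (univ : Finset M),
      𝔼 ω, (if bad e ω then 1 else 0 : ℝ) ≤ exp (-(ε * m) / 8) := by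
    rintro ⟨_ | f, s⟩ he
    · refine (expect_boole_card_decodeSymbol_eq_some_le_le s (m / 2)).trans (exp_le_exp.mpr ?_)
      nlinarith [exp_neg_one_lt_d9]
    · have hf := hF f (by simpa using he)
      exact expect_boole_tamperCount_ge_half_le hf.1 hf.2 s hε.le hR
  obtain ⟨ω, hω⟩ := exists_forall_not_of_card_mul_lt_one _ bad hbad (by
    simpa [card_insertNone] using hunion)
  refine ⟨decodeSymbol ∘ ω, fun s => ?_⟩
  have hfiber : m / 2 < #{x | decodeSymbol (ω x) = some s} :=
    not_le.mp (hω (none, s) (by simp))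
  refine ⟨?_, fun f hf => ?_⟩
  · have hpos : 0 < #{x | decodeSymbol (ω x) = some s} := by
      exact_mod_cast (by positivity : (0 : ℝ) ≤ m / 2).trans_lt hfiber
    obtain ⟨x, hx⟩ := card_pos.mp hpos
    exact ⟨x, (mem_filter.mp hx).2⟩
  · have htc : (tamperCount (decodeSymbol ∘ ω) f s : ℝ) < ε * m / 2 :=
      not_le.mp (hω (some f, s) (by simpa using hf))
    have hεfiber := mul_lt_mul_of_pos_left hfiber hε
    simp only [comp_apply]
    linarith

end RandomCode

theorem statDist_ite_eq_one_sub {α : Type*} [Fintype α] [DecidableEq α] {P : α → ℝ}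
    (hP : IsDist P) (a : α) : statDist P (fun y => if y = a then 1 else 0) = 1 - P a := by
  have hPa : P a ≤ 1 := hP.2 ▸ single_le_sum (fun y _ => hP.1 y) (mem_univ a)
  have hrest : ∑ y ∈ univ.erase a, |P y - if y = a then 1 else 0| = 1 - P a := by
    rw [sum_congr rfl fun y hy => by rw [if_neg (ne_of_mem_erase hy), sub_zero,
      abs_of_nonneg (hP.1 y)], sum_erase_eq_sub (mem_univ a), hP.2]
  rw [statDist, ← add_sum_erase _ _ (mem_univ a), hrest, if_pos rfl,
    abs_of_nonpos (by linarith)]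
  ring

namespace CodingScheme

variable {n k : ℕ}

theorem isDist_decDist (C : CodingScheme n k) (f : Word n → Word n) (s : Msg k) :
    IsDist (decDist C f s) := by
  refine ⟨fun y => sum_nonneg fun x _ => ?_, ?_⟩
  · split_ifs
    exacts [C.enc_nonneg s x, le_rfl]
  · simp only [decDist]
    rw [sum_comm]
    simp [C.enc_sum s]

theorem one_sub_decDist_none (C : CodingScheme n k) (f : Word n → Word n) (s : Msg k) :
    1 - decDist C f s none = ∑ x, if C.dec (f x) ≠ none then C.enc s x else 0 := by
  rw [← C.enc_sum s, decDist, ← sum_sub_distrib]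
  refine sum_congr rfl fun x _ => ?_
  split_ifs <;> simp_all

theorem copyDist_ite_eq_bot (s : Msg k) :
    copyDist (fun v => if v = some none then 1 else 0) s = fun y => if y = none then 1 else 0 := by
  funext y
  rw [copyDist, sum_eq_single (some none) (fun v _ hv => by simp [hv]) (by simp)]
  simp [copyFn, eq_comm]

theorem nonMalleable_of_tamper_invalid (C : CodingScheme n k) (F : Set (Word n → Word n))
    {ε : ℝ} (h : ∀ f ∈ F, ∀ s, (∑ x, if C.dec (f x) ≠ none then C.enc s x else 0) ≤ ε) :
    NonMalleable C F ε := fun f hf =>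
  ⟨fun v => if v = some none then 1 else 0, ⟨fun _ => by positivity, by simp⟩, fun s => by
    rw [copyDist_ite_eq_bot, statDist_ite_eq_one_sub (C.isDist_decDist f s),
      one_sub_decDist_none]
    exact h f hf s⟩

noncomputable def ofDecoder (dec : Word n → Option (Msg k)) (hdec : ∀ s, ∃ x, dec x = some s) :
    CodingScheme n k where
  enc s x := if dec x = some s then (#{y | dec y = some s} : ℝ)⁻¹ else 0
  dec := dec
  enc_nonneg s x := by split_ifs <;> positivity
  enc_sum s := by
    obtain ⟨x, hx⟩ := hdec s
    have : #{y | dec y = some s} ≠ 0 := (card_pos.mpr ⟨x, by simpa using hx⟩).ne'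
    rw [← sum_filter, sum_const, nsmul_eq_mul, mul_inv_cancel₀ (by exact_mod_cast this)]
  dec_enc s x h := by
    by_contra hx
    simp [hx] at h

theorem ofDecoder_tamper_valid (dec : Word n → Option (Msg k))
    (hdec : ∀ s, ∃ x, dec x = some s) (f : Word n → Word n) (s : Msg k) :
    (∑ x, if dec (f x) ≠ none then (ofDecoder dec hdec).enc s x else 0)
      = tamperCount dec f s / #{x | dec x = some s} := by
  simp only [ofDecoder, tamperCount, ← ite_and, and_comm, ← sum_filter, sum_const, nsmul_eq_mul,
    div_eq_mul_inv]

theorem ofDecoder_tamper_valid_le {dec : Word n → Option (Msg k)}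
    (hdec : ∀ s, ∃ x, dec x = some s) {f : Word n → Word n} {s : Msg k} {ε : ℝ}
    (h : (tamperCount dec f s : ℝ) ≤ ε * #{x | dec x = some s}) :
    (∑ x, if dec (f x) ≠ none then (ofDecoder dec hdec).enc s x else 0) ≤ ε := by
  obtain ⟨x, hx⟩ := hdec s
  have hfiber : (0 : ℝ) < #{x | dec x = some s} := by
    exact_mod_cast card_pos.mpr ⟨x, by simpa using hx⟩
  exact (ofDecoder_tamper_valid dec hdec f s).trans_le ((div_le_iff₀ hfiber).mpr h)

end CodingScheme

theorem exists_tag_length {n k : ℕ} {N ε : ℝ} (hN : 1 ≤ N) (hε : 0 < ε) (hε1 : ε < 1)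
    (hk : (k : ℝ) ≤ n - logb 2 (logb 2 (4 * 2 ^ n * N)) - 2 * logb 2 (1 / ε) - 10) :
    ∃ r : ℕ, 64 ≤ ε * 2 ^ r ∧ (N + 1) * 2 ^ k * exp (-(ε * (2 ^ n / (2 ^ r * 2 ^ k))) / 8) < 1 := by
  have hε' : 1 ≤ 1 / ε := by rw [le_div_iff₀ hε]; linarith
  obtain ⟨j, hj, hj'⟩ := exists_nat_pow_near (by linarith : (1 : ℝ) ≤ 64 * (1 / ε)) one_lt_two
  refine ⟨j + 1, by nlinarith [mul_one_div_cancel hε.ne'], ?_⟩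
  set L := logb 2 (4 * 2 ^ n * N)
  have h2L : (2 : ℝ) ^ L = 4 * 2 ^ n * N := rpow_logb (by norm_num) (by norm_num) (by positivity)
  have hL : 1 ≤ L := by
    rw [le_logb_iff_rpow_le one_lt_two (by positivity), rpow_one]
    nlinarith [one_le_pow₀ (M₀ := ℝ) (n := n) one_le_two]
  have hkn : k ≤ n := by
    have := logb_nonneg one_lt_two hL
    have := logb_nonneg one_lt_two hε'
    exact_mod_cast (show (k : ℝ) ≤ n by linarith)
  have hsize : 2 ^ k * L * (1 / ε) ^ 2 * 2 ^ 10 ≤ (2 : ℝ) ^ n := by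
    rw [← rpow_natCast 2 n, ← logb_le_iff_le_rpow one_lt_two (by positivity),
      logb_mul (by positivity) (by positivity), logb_mul (by positivity) (by positivity),
      logb_mul (by positivity) (by positivity), logb_pow, logb_pow, logb_pow,
      logb_self_eq_one one_lt_two]
    push_cast
    linarith
  have hy : L ≤ ε * (2 ^ n / (2 ^ (j + 1) * 2 ^ k)) / 8 := by
    rw [mul_div_assoc', le_div_iff₀ (by positivity), le_div_iff₀ (by positivity)]
    calc L * 8 * (2 ^ (j + 1) * 2 ^ k) ≤ L * 8 * (128 * (1 / ε) * 2 ^ k) := by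
          gcongr; rw [pow_succ]; linarith
      _ = ε * (2 ^ k * L * (1 / ε) ^ 2 * 2 ^ 10) := by field_simp; ring
      _ ≤ ε * 2 ^ n := by gcongr
  have hsmall : (N + 1) * 2 ^ k < (2 : ℝ) ^ L := by
    rw [h2L]
    have := pow_le_pow_right₀ (M₀ := ℝ) one_le_two hkn
    nlinarith [mul_le_mul_of_nonneg_left this (by linarith : (0 : ℝ) ≤ N + 1),
      mul_pos (by linarith : (0 : ℝ) < 3 * N - 1) (pow_pos two_pos n)]
  calc (N + 1) * 2 ^ k * exp (-(ε * (2 ^ n / (2 ^ (j + 1) * 2 ^ k))) / 8)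
      < 2 ^ L * exp (-(ε * (2 ^ n / (2 ^ (j + 1) * 2 ^ k))) / 8) :=
        mul_lt_mul_of_pos_right hsmall (exp_pos _)
    _ ≤ 2 ^ L * exp (-L) := by gcongr; linarith
    _ = exp (L * (log 2 - 1)) := by rw [rpow_def_of_pos two_pos, ← exp_add]; ring_nf
    _ ≤ 1 := exp_le_one_iff.mpr <| mul_nonpos_of_nonneg_of_nonpos (by linarith)
        (by linarith [log_two_lt_d9])

/-- There is an absolute constant `C` such that for every family `F`
of fixed-point-free bijections on `{0,1}^n`, every `ε ∈ (0,1)`, and every integer `k`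
with `1 ≤ k ≤ n − log log(4·2^n·|F|) − 2 log(1/ε) − C`, there is a coding scheme with
block length `n`, message length `k` such that `Pr[Dec(f(Enc(s))) ≠ ⊥] ≤ ε` for every
`f ∈ F` and `s`; in particular it is non-malleable w.r.t. `F` with error `ε`. -/
theorem nonmalleable_bijective_adversaries :
    ∃ C : ℝ, ∀ n : ℕ, 1 ≤ n → ∀ F : Finset (Word n → Word n),
    (∀ f ∈ F, Function.Bijective f ∧ ∀ x, f x ≠ x) →
    ∀ ε : ℝ, 0 < ε → ε < 1 →
    ∀ k : ℕ, 1 ≤ k →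
    (k : ℝ) ≤ (n : ℝ)
        - Real.logb 2 (Real.logb 2 (4 * 2 ^ (n : ℕ) * (F.card : ℝ)))
        - 2 * Real.logb 2 (1/ε) - C →
    ∃ Cs : CodingScheme n k,
      (∀ f ∈ F, ∀ s : Msg k,
        (∑ x, if Cs.dec (f x) ≠ none then Cs.enc s x else 0) ≤ ε) ∧
      NonMalleable Cs (↑F) ε := by
  refine ⟨10, fun n _ F hF ε hε hε1 k _ hk => ?_⟩
  rcases F.eq_empty_or_nonempty with rfl | hFne
  -- for `F = ∅` the hypothesis degenerates (`logb 2 0 = 0`) to `k ≤ n`, and any scheme will do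
  · have hkn : k ≤ n := by
      have := logb_nonneg one_lt_two (one_le_one_div hε hε1.le)
      simp only [card_empty, Nat.cast_zero, mul_zero, logb_zero] at hk
      exact_mod_cast (show (k : ℝ) ≤ n by linarith)
    let C := CodingScheme.ofDecoder (fun x => some (x ∘ Fin.castLE hkn)) fun s =>
      ((Fin.castLE_injective hkn).surjective_comp_right s).imp fun _ => congrArg some
    exact ⟨C, by simp, C.nonMalleable_of_tamper_invalid _ (by simp)⟩
  obtain ⟨r, hR, hunion⟩ :=
    exists_tag_length (N := #F) (by exact_mod_cast hFne.card_pos) hε hε1 hk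
  obtain ⟨dec, hdec⟩ := exists_decoder_tamperCount_le (α := Word n) (M := Msg k) (Fin r → Bool)
    F hF hε hε1.le (by simpa using hR) (by simpa using hunion)
  let C := CodingScheme.ofDecoder dec fun s => (hdec s).1
  have hvalid : ∀ f ∈ F, ∀ s : Msg k, (∑ x, if C.dec (f x) ≠ none then C.enc s x else 0) ≤ ε :=
    fun f hf s => CodingScheme.ofDecoder_tamper_valid_le _ ((hdec s).2 f hf)
  exact ⟨C, hvalid, C.nonMalleable_of_tamper_invalid _ hvalid⟩
end

section
/- There is an absolute constant C such that the following holds. Let n be a positive integer, α ∈ (0,1] with αn an integer, and T ⊆ [n] with |T| = αn. Let F_T be the family of all functions f : {0,1}^n → {0,1}^n of the form f(x) = (g(x_T), x_{T̄}) for some g : {0,1}^{αn} → {0,1}^{αn}, where x_T is the restriction of x to the coordinates in T and x_{T̄} its restriction to the complement. Set δ_0 = C (log n)/n. Then for every δ ∈ [δ_0, α], every coding scheme with block length n and message length k with rate k/n ≥ 1 − α + δ that is non-malleable with respect to F_T with error ε must satisfy ε ≥ δ/(16α). -/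
open Finset

/-- The family `F_T` of tampering functions acting only on the coordinates in `T`:
`f(x) = (g(x_T), x_{T̄})`, i.e., `f` leaves coordinates outside `T` unchanged and
the coordinates of `f(x)` inside `T` depend only on the coordinates of `x` in `T`. -/
def ActsOn {n : ℕ} (T : Finset (Fin n)) : Set (Word n → Word n) :=
  {f | (∀ x : Word n, ∀ i ∉ T, f x i = x i) ∧
       (∀ x y : Word n, (∀ i ∈ T, x i = y i) → ∀ i ∈ T, f x i = f y i)}

/-!
For two messages `s₁, s₂`, the adversary in `F_T` keeps a word `x` whenever its `T`-part is the
`T`-part of some codeword of `s₁`, and otherwise overwrites the `T`-part by a fixed `w`. Under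
`Enc(s₁)` nothing changes, so the simulator must put mass `≈ 1` on `same` and `s₁`; under
`Enc(s₂)` these outcomes are decoded as `s₂` and `s₁`, which happens only if `x_T` is consistent
with `s₁` or the overwritten word decodes to `s₂` or `s₁`. Only `2^(n-|T|)` words share a
`T`-part, so averaged over all pairs these events have probability `O(2^(n-|T|-k))`; once
`k ≥ n - |T| + 2` this forces `ε ≥ 1/12 ≥ δ/(16α)`. The rate bound with `δ ≥ 2 log n / n` gives
exactly this for `n ≥ 2`; for `n = 1`, `F_T` contains every function, and swapping two codewords
gives `ε ≥ 1/2`.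
-/

lemma statDist_nonneg {α : Type*} [Fintype α] (P Q : α → ℝ) : 0 ≤ statDist P Q :=
  div_nonneg (sum_nonneg fun _ _ => abs_nonneg _) zero_le_two

lemma abs_sub_le_statDist {α : Type*} [Fintype α] {P Q : α → ℝ}
    (h : ∑ a, P a = ∑ a, Q a) (a : α) : |P a - Q a| ≤ statDist P Q := by
  classical
  have hrest : P a - Q a = -∑ b ∈ univ.erase a, (P b - Q b) := by
    rw [eq_neg_iff_add_eq_zero, add_sum_erase univ (fun b => P b - Q b) (mem_univ a),
      sum_sub_distrib, h, sub_self]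
  have hle := abs_sum_le_sum_abs (fun b => P b - Q b) (univ.erase a)
  have hsplit := add_sum_erase univ (fun b => |P b - Q b|) (mem_univ a)
  rw [← abs_neg, ← hrest] at hle
  rw [statDist, ← hsplit]
  linarith

lemma card_filter_eqOn_le {ι β : Type*} [Fintype ι] [DecidableEq ι] [Fintype β] [DecidableEq β]
    (T : Finset ι) (x : ι → β) :
    #{y : ι → β | ∀ i ∈ T, y i = x i} ≤ Fintype.card β ^ (Fintype.card ι - #T) := by
  calc #{y : ι → β | ∀ i ∈ T, y i = x i}
      ≤ #(univ : Finset ({i // i ∉ T} → β)) := by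
        refine card_le_card_of_injOn (fun y i => y i) (fun _ _ => mem_univ _) ?_
        intro y hy z hz hyz
        funext i
        by_cases hi : i ∈ T
        · simp only [coe_filter, mem_univ, true_and, Set.mem_ofPred_eq] at hy hz
          rw [hy i hi, hz i hi]
        · exact congrFun hyz ⟨i, hi⟩
    _ = Fintype.card β ^ (Fintype.card ι - #T) := by
        rw [card_univ, Fintype.card_fun, Fintype.card_subtype_compl, Fintype.card_coe]

lemma card_image_piecewise_le {ι β : Type*} [Fintype ι] [DecidableEq ι] [Fintype β]
    [DecidableEq β] (T : Finset ι) (w : ι → β) :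
    #(univ.image fun x => T.piecewise w x) ≤ Fintype.card β ^ (Fintype.card ι - #T) :=
  calc #(univ.image fun x => T.piecewise w x) ≤ #{y : ι → β | ∀ i ∈ T, y i = w i} :=
        card_le_card fun y hy => by
          obtain ⟨x, -, rfl⟩ := mem_image.1 hy
          exact mem_filter.2 ⟨mem_univ _, fun i hi => piecewise_eq_of_mem _ _ _ hi⟩
    _ ≤ Fintype.card β ^ (Fintype.card ι - #T) := card_filter_eqOn_le T w

lemma copyDist_some {k : ℕ} (D : NMVal k → ℝ) (s u : Msg k) :
    copyDist D s (some u) = (if s = u then D none else 0) + D (some (some u)) := by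
  rw [copyDist, Fintype.sum_option]
  congr 1 <;> simp [copyFn]

lemma sum_copyDist {k : ℕ} {D : NMVal k → ℝ} (hD : ∑ v, D v = 1) (s : Msg k) :
    ∑ y, copyDist D s y = 1 := by
  simp only [copyDist]
  rw [sum_comm]
  simpa only [sum_ite_eq, mem_univ, if_true] using hD

lemma sum_decDist {n k : ℕ} (C : CodingScheme n k) (f : Word n → Word n) (s : Msg k) :
    ∑ y, decDist C f s y = 1 := by
  simp only [decDist]
  rw [sum_comm]
  simpa only [sum_ite_eq, mem_univ, if_true] using C.enc_sum s

namespace CodingScheme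

variable {n k : ℕ} (C : CodingScheme n k)

def encProb (s : Msg k) (p : Word n → Prop) [DecidablePred p] : ℝ :=
  ∑ x, if p x then C.enc s x else 0

lemma sum_enc_le_one (s : Msg k) (S : Finset (Word n)) : ∑ x ∈ S, C.enc s x ≤ 1 :=
  (sum_le_sum_of_subset_of_nonneg (subset_univ S) fun x _ _ => C.enc_nonneg s x).trans
    (C.enc_sum s).le

lemma exists_enc_pos (s : Msg k) : ∃ x, 0 < C.enc s x := by
  by_contra! h
  have := C.enc_sum s
  rw [sum_eq_zero fun x _ => (h x).antisymm (C.enc_nonneg s x)] at this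
  exact zero_ne_one this

variable {C}

lemma encProb_nonneg (s : Msg k) (p : Word n → Prop) [DecidablePred p] : 0 ≤ C.encProb s p :=
  sum_nonneg fun x _ => ite_nonneg (C.enc_nonneg s x) le_rfl

lemma encProb_eq_one {s : Msg k} {p : Word n → Prop} [DecidablePred p]
    (h : ∀ x, 0 < C.enc s x → p x) : C.encProb s p = 1 := by
  rw [← C.enc_sum s]
  refine sum_congr rfl fun x _ => ?_
  rcases (C.enc_nonneg s x).eq_or_lt with h0 | hpos
  · simp [← h0]
  · simp [h x hpos]

lemma encProb_mono {s : Msg k} {p q : Word n → Prop} [DecidablePred p] [DecidablePred q]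
    (h : ∀ x, 0 < C.enc s x → p x → q x) : C.encProb s p ≤ C.encProb s q := by
  refine sum_le_sum fun x _ => ?_
  rcases (C.enc_nonneg s x).eq_or_lt with h0 | hpos
  · simp [← h0]
  · by_cases hp : p x
    · simp [hp, h x hpos hp]
    · simp [hp, ite_nonneg (C.enc_nonneg s x)]

lemma encProb_le_add {s : Msg k} {p q r : Word n → Prop} [DecidablePred p] [DecidablePred q]
    [DecidablePred r] (h : ∀ x, 0 < C.enc s x → p x → q x ∨ r x) :
    C.encProb s p ≤ C.encProb s q + C.encProb s r := by
  rw [encProb, encProb, encProb, ← sum_add_distrib]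
  refine sum_le_sum fun x _ => ?_
  rcases (C.enc_nonneg s x).eq_or_lt with h0 | hpos
  · simp [← h0]
  · have := C.enc_nonneg s x
    by_cases hp : p x
    · rcases h x hpos hp with hq | hr
      · simp [hp, hq, ite_nonneg this]
      · simp [hp, hr, ite_nonneg this]
    · simp [hp, ite_nonneg this, add_nonneg]

lemma sum_encProb_le {ι : Type*} [Fintype ι] (s : Msg k) (p : ι → Word n → Prop)
    [∀ i, DecidablePred (p i)] {m : ℕ} (h : ∀ x, #{i | p i x} ≤ m) :
    ∑ i, C.encProb s (p i) ≤ m := by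
  unfold encProb
  rw [sum_comm]
  calc ∑ x, ∑ i, (if p i x then C.enc s x else 0)
      = ∑ x, #{i | p i x} * C.enc s x := by
        simp only [← sum_filter, sum_const, nsmul_eq_mul]
    _ ≤ ∑ x, m * C.enc s x := by
        gcongr with x
        · exact C.enc_nonneg s x
        · exact h x
    _ = m := by rw [← mul_sum, C.enc_sum, mul_one]

lemma sum_encProb_dec_comp_le_card_image (g : Word n → Word n) :
    ∑ s, C.encProb s (fun x => C.dec (g x) = some s) ≤ #(univ.image g) := by
  have hfiber : ∀ s, C.encProb s (fun x => C.dec (g x) = some s) =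
      ∑ y ∈ univ.image g, if C.dec y = some s then ∑ x with g x = y, C.enc s x else 0 := by
    intro s
    rw [encProb, ← sum_fiberwise_of_maps_to fun x _ => mem_image_of_mem g (mem_univ x)]
    refine sum_congr rfl fun y _ => ?_
    trans ∑ x with g x = y, if C.dec y = some s then C.enc s x else 0
    · exact sum_congr rfl fun x hx => by rw [(mem_filter.1 hx).2]
    · rw [sum_ite_irrel, sum_const_zero]
  rw [sum_congr rfl fun s _ => hfiber s, sum_comm, ← nsmul_one, ← sum_const]
  refine sum_le_sum fun y _ => ?_
  cases hy : C.dec y with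
  | none => simp
  | some t =>
    simpa only [Option.some.injEq, sum_ite_eq, mem_univ, if_true] using C.sum_enc_le_one t _

end CodingScheme

lemma id_mem_actsOn {n : ℕ} (T : Finset (Fin n)) : id ∈ ActsOn T :=
  ⟨fun _ _ _ => rfl, fun _ _ h => h⟩

lemma mem_actsOn_univ {n : ℕ} (f : Word n → Word n) : f ∈ ActsOn univ := by
  refine ⟨fun _ i hi => absurd (mem_univ i) hi, fun x y hxy _ _ => ?_⟩
  rw [funext fun j => hxy j (mem_univ j)]

namespace NonMalleable

variable {n k : ℕ} {C : CodingScheme n k} {F : Set (Word n → Word n)} {ε : ℝ}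
  {f : Word n → Word n}

lemma nonneg (h : NonMalleable C F ε) (hf : f ∈ F) : 0 ≤ ε := by
  obtain ⟨D, -, hD⟩ := h f hf
  exact (statDist_nonneg _ _).trans (hD default)

lemma exists_abs_sub_le (h : NonMalleable C F ε) (hf : f ∈ F) :
    ∃ D : NMVal k → ℝ, IsDist D ∧ ∀ s u : Msg k,
      |decDist C f s (some u) - ((if s = u then D none else 0) + D (some (some u)))| ≤ ε := by
  obtain ⟨D, hD, hclose⟩ := h f hf
  refine ⟨D, hD, fun s u => ?_⟩
  rw [← copyDist_some]
  exact (abs_sub_le_statDist (by rw [sum_decDist, sum_copyDist hD.2]) _).trans (hclose s)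

lemma decDist_self_le (h : NonMalleable C F ε) (hf : f ∈ F) (s₁ s₂ : Msg k) :
    decDist C f s₁ (some s₁) ≤ 3 * ε + decDist C f s₂ (some s₂) + decDist C f s₂ (some s₁) := by
  -- `D` gives `same` and `s₁` total mass `≈ P[s₁ | s₁]`; under `Enc s₂` they decode to `s₂`, `s₁`.
  obtain ⟨D, ⟨hD₀, -⟩, hD⟩ := h.exists_abs_sub_le hf
  have h₁ := (abs_le.1 (hD s₁ s₁)).2
  have h₂ := (abs_le.1 (hD s₂ s₂)).1
  have h₃ := (abs_le.1 (hD s₂ s₁)).1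
  simp only [if_true] at h₁ h₂
  split_ifs at h₃ <;> linarith [hD₀ none, hD₀ (some (some s₂))]

lemma add_decDist_swap_le (h : NonMalleable C F ε) (hf : f ∈ F) {s₁ s₂ : Msg k}
    (hne : s₁ ≠ s₂) : decDist C f s₁ (some s₂) + decDist C f s₂ (some s₁) ≤ 1 + 2 * ε := by
  obtain ⟨D, ⟨hD₀, hD₁⟩, hD⟩ := h.exists_abs_sub_le hf
  have h₁ := (abs_le.1 (hD s₁ s₂)).2
  have h₂ := (abs_le.1 (hD s₂ s₁)).2
  rw [if_neg hne] at h₁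
  rw [if_neg hne.symm] at h₂
  have hpair : D (some (some s₁)) + D (some (some s₂)) ≤ 1 := by
    rw [← hD₁, ← sum_pair (by simpa using hne)]
    exact sum_le_sum_of_subset_of_nonneg (subset_univ _) fun v _ _ => hD₀ v
  linarith

lemma half_le_of_actsOn_univ (h : NonMalleable C (ActsOn univ) ε) (hk : 0 < k) : 1 / 2 ≤ ε := by
  obtain ⟨s₁, s₂, hne⟩ : ∃ s₁ s₂ : Msg k, s₁ ≠ s₂ :=
    ⟨fun _ => false, fun _ => true, fun h => by simpa using congrFun h ⟨0, hk⟩⟩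
  obtain ⟨x₁, hx₁⟩ := C.exists_enc_pos s₁
  obtain ⟨x₂, hx₂⟩ := C.exists_enc_pos s₂
  let f : Word n → Word n := fun x => if C.dec x = some s₁ then x₂ else x₁
  have h₁ : decDist C f s₁ (some s₂) = 1 := CodingScheme.encProb_eq_one fun x hx => by
    simp [f, C.dec_enc _ _ hx, C.dec_enc _ _ hx₂]
  have h₂ : decDist C f s₂ (some s₁) = 1 := CodingScheme.encProb_eq_one fun x hx => by
    simp [f, C.dec_enc _ _ hx, hne.symm, C.dec_enc _ _ hx₁]
  linarith [h.add_decDist_swap_le (mem_actsOn_univ f) hne]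

end NonMalleable

namespace CodingScheme

variable {n k : ℕ} (C : CodingScheme n k)

def MatchesOn (T : Finset (Fin n)) (s : Msg k) (x : Word n) : Prop :=
  ∃ x', 0 < C.enc s x' ∧ ∀ i ∈ T, x' i = x i

open scoped Classical in
lemma card_matchesOn_le (T : Finset (Fin n)) (x : Word n) :
    #{s | C.MatchesOn T s x} ≤ 2 ^ (n - #T) := by
  calc #{s | C.MatchesOn T s x} ≤ #{y : Word n | ∀ i ∈ T, y i = x i} := by
        refine card_le_card_of_surjOn (fun y => (C.dec y).getD default) ?_
        intro s hs
        obtain ⟨x', hpos, hx'⟩ := (mem_filter.1 hs).2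
        exact ⟨x', mem_filter.2 ⟨mem_univ _, hx'⟩, by simp [C.dec_enc _ _ hpos]⟩
    _ ≤ 2 ^ (n - #T) := by convert card_filter_eqOn_le T x <;> simp

open scoped Classical in
noncomputable def overwriteUnlessMatchesOn (T : Finset (Fin n)) (w : Word n) (s : Msg k)
    (x : Word n) : Word n :=
  if C.MatchesOn T s x then x else T.piecewise w x

lemma overwriteUnlessMatchesOn_mem_actsOn (T : Finset (Fin n)) (w : Word n) (s : Msg k) :
    C.overwriteUnlessMatchesOn T w s ∈ ActsOn T := by
  refine ⟨fun x i hi => ?_, fun x y hxy i hi => ?_⟩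
  · unfold overwriteUnlessMatchesOn
    split_ifs
    · rfl
    · exact piecewise_eq_of_notMem _ _ _ hi
  · have hiff : C.MatchesOn T s x ↔ C.MatchesOn T s y :=
      exists_congr fun x' => and_congr_right' <| forall₂_congr fun j hj => by rw [hxy j hj]
    unfold overwriteUnlessMatchesOn
    by_cases hx : C.MatchesOn T s x
    · simp [hx, hiff.1 hx, hxy i hi]
    · simp [hx, mt hiff.2 hx, piecewise_eq_of_mem _ _ _ hi]

end CodingScheme

namespace NonMalleable

open CodingScheme

variable {n k : ℕ} {C : CodingScheme n k} {T : Finset (Fin n)} {ε : ℝ}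

open scoped Classical in
lemma one_le_of_actsOn (h : NonMalleable C (ActsOn T) ε) (w : Word n) (s₁ s₂ : Msg k) :
    1 ≤ 3 * ε + C.encProb s₂ (C.MatchesOn T s₁)
      + C.encProb s₂ (fun x => C.dec (T.piecewise w x) = some s₂)
      + C.encProb s₂ (fun x => C.dec (T.piecewise w x) = some s₁) := by
  have hε := h.nonneg (id_mem_actsOn T)
  have hself : ∀ s x, 0 < C.enc s x → C.MatchesOn T s x := fun _ x hx => ⟨x, hx, fun _ _ => rfl⟩
  obtain rfl | hne := eq_or_ne s₁ s₂
  · linarith [encProb_eq_one (hself s₁), encProb_nonneg (C := C) s₁ fun x =>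
      C.dec (T.piecewise w x) = some s₁]
  set f := C.overwriteUnlessMatchesOn T w s₁
  have hkeep : ∀ x, C.MatchesOn T s₁ x → f x = x := fun x hx => if_pos hx
  have hover : ∀ x, ¬ C.MatchesOn T s₁ x → f x = T.piecewise w x := fun x hx => if_neg hx
  have h₁ : decDist C f s₁ (some s₁) = 1 := encProb_eq_one fun x hx => by
    rw [hkeep x (hself s₁ x hx), C.dec_enc _ _ hx]
  have h₂ : decDist C f s₂ (some s₂) ≤ C.encProb s₂ (C.MatchesOn T s₁)
      + C.encProb s₂ (fun x => C.dec (T.piecewise w x) = some s₂) :=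
    encProb_le_add fun x _ hx => by
      by_cases hm : C.MatchesOn T s₁ x
      · exact Or.inl hm
      · exact Or.inr (hover x hm ▸ hx)
  have h₃ :
      decDist C f s₂ (some s₁) ≤ C.encProb s₂ (fun x => C.dec (T.piecewise w x) = some s₁) :=
    encProb_mono fun x hx hdec => by
      by_cases hm : C.MatchesOn T s₁ x
      · rw [hkeep x hm, C.dec_enc _ _ hx, Option.some_inj] at hdec
        exact absurd hdec.symm hne
      · rwa [hover x hm] at hdec
  linarith [h.decDist_self_le (C.overwriteUnlessMatchesOn_mem_actsOn T w s₁) s₁ s₂]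

open scoped Classical in
lemma one_twelfth_le (h : NonMalleable C (ActsOn T) ε) (hk : n - #T + 2 ≤ k) :
    1 / 12 ≤ ε := by
  set K : ℝ := 2 ^ k
  set M : ℝ := 2 ^ (n - #T)
  set w : Word n := default
  have hMK : 4 * M ≤ K :=
    calc 4 * M = 2 ^ (n - #T + 2) := by rw [pow_add]; ring
      _ ≤ K := pow_le_pow_right₀ one_le_two hk
  have hcard : (Fintype.card (Msg k) : ℝ) = K := by simp [K]
  have hmatch : ∀ s₂, ∑ s₁, C.encProb s₂ (C.MatchesOn T s₁) ≤ M := fun s₂ =>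
    (C.sum_encProb_le s₂ _ (C.card_matchesOn_le T)).trans_eq (by simp [M])
  have hdecode : ∀ s₂, ∑ s₁, C.encProb s₂ (fun x => C.dec (T.piecewise w x) = some s₁) ≤ 1 := by
    intro s₂
    refine (C.sum_encProb_le s₂ _ fun x => card_le_one.2 fun a ha b hb => ?_).trans_eq
      Nat.cast_one
    simp only [mem_filter, mem_univ, true_and] at ha hb
    exact Option.some_injective _ (ha.symm.trans hb)
  have hdiag : ∑ s, C.encProb s (fun x => C.dec (T.piecewise w x) = some s) ≤ M := by
    have himage : #(univ.image fun x => T.piecewise w x) ≤ 2 ^ (n - #T) := by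
      simpa using card_image_piecewise_le T w
    refine (C.sum_encProb_dec_comp_le_card_image _).trans ?_
    exact (Nat.cast_le.2 himage).trans_eq (by simp [M])
  have hrow : ∀ s₂, K ≤ 3 * ε * K + M
      + K * C.encProb s₂ (fun x => C.dec (T.piecewise w x) = some s₂) + 1 := fun s₂ => by
    have := sum_le_sum fun s₁ (_ : s₁ ∈ univ) => h.one_le_of_actsOn w s₁ s₂
    simp only [sum_add_distrib, sum_const, card_univ, hcard, nsmul_eq_mul, mul_one] at this
    linarith [hmatch s₂, hdecode s₂]
  have hsum := sum_le_sum fun s₂ (_ : s₂ ∈ univ) => hrow s₂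
  simp only [sum_add_distrib, sum_const, card_univ, hcard, nsmul_eq_mul, ← mul_sum] at hsum
  have hK : 0 < K := by positivity
  have hM₁ : 1 ≤ M := one_le_pow₀ one_le_two
  have hKM : K ≤ 3 * ε * K + 2 * M + 1 := le_of_mul_le_mul_left (by nlinarith) hK
  nlinarith

end NonMalleable

/-- There is an absolute constant `C` such that for every `n`,
`α ∈ (0,1]` with `αn = |T|` for a set `T ⊆ [n]`, and every `δ ∈ [C log n / n, α]`:
any coding scheme with block length `n`, message length `k`, rate `k/n ≥ 1 − α + δ`
that is non-malleable w.r.t. `F_T` with error `ε` satisfies `ε ≥ δ/(16α)`. -/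
theorem subset_tampering_rate_upper_bound :
    ∃ C : ℝ, 0 < C ∧
    ∀ n : ℕ, 1 ≤ n → ∀ α : ℝ, 0 < α → α ≤ 1 →
    ∀ T : Finset (Fin n), (T.card : ℝ) = α * (n : ℝ) →
    ∀ δ : ℝ, C * Real.logb 2 (n : ℝ) / (n : ℝ) ≤ δ → δ ≤ α →
    ∀ k : ℕ, ∀ Cs : CodingScheme n k, 1 - α + δ ≤ (k : ℝ) / (n : ℝ) →
    ∀ ε : ℝ, NonMalleable Cs (ActsOn T) ε →
      δ / (16 * α) ≤ ε := by
  refine ⟨2, two_pos, fun n hn α hα₀ hα₁ T hT δ hδ hδα k Cs hrate ε hNM => ?_⟩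
  have hε : 0 ≤ ε := hNM.nonneg (id_mem_actsOn T)
  have hδ16 : δ / (16 * α) ≤ 1 / 16 := by
    rw [div_le_iff₀ (by positivity)]
    linarith
  have hk : (n : ℝ) - #T + δ * n ≤ k := by
    rw [le_div_iff₀ (by positivity)] at hrate
    linarith
  have hTn : #T ≤ n := (card_le_univ T).trans_eq (Fintype.card_fin n)
  obtain rfl | hn₂ : n = 1 ∨ 2 ≤ n := by omega
  · have hT₁ : #T = 1 := by
      have : (0 : ℝ) < #T := by rw [hT]; positivity
      exact le_antisymm hTn (by exact_mod_cast this)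
    rcases Nat.eq_zero_or_pos k with rfl | hk₀
    · have hδ₀ : δ ≤ 0 := by simpa [hT₁] using hk
      exact (div_nonpos_of_nonpos_of_nonneg hδ₀ (by positivity)).trans hε
    · rw [eq_univ_of_card T (by simpa using hT₁)] at hNM
      linarith [hNM.half_le_of_actsOn_univ hk₀]
  · have hlog : 1 ≤ Real.logb 2 n := by
      rw [Real.le_logb_iff_rpow_le one_lt_two (by positivity), Real.rpow_one]
      exact_mod_cast hn₂
    have hδn : 2 ≤ δ * n := by
      rw [div_le_iff₀ (by positivity)] at hδ
      linarith
    have hk₂ : n - #T + 2 ≤ k := by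
      have : ((n - #T : ℕ) : ℝ) + 2 ≤ k := by rw [Nat.cast_sub hTn]; linarith
      exact_mod_cast this
    linarith [hNM.one_twelfth_le hk₂]
end

section
/- There is an absolute constant C such that the following holds. Let D be a probability distribution over a finite set Σ with |supp(D)| ≤ r, and let η, ε, γ > 0 with γ < ε. Let n be any integer with n ≥ C·(r + 2 + log(1/η))/(ε − γ)². Suppose X_1, …, X_n ∈ Σ are possibly correlated random variables such that for every i ∈ [n] and every realization (x_1, …, x_{i−1}) of positive probability of the preceding variables, the conditional distribution of X_i given X_1 = x_1, …, X_{i−1} = x_{i−1} is within statistical distance γ of D. Then with probability at least 1 − η, the empirical distribution of the outcomes X_1, …, X_n (which assigns to each a ∈ Σ the fraction of indices i with X_i = a) is within statistical distance ε of D. -/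
/-! Fix a set `S` containing the complement of `supp D`. Given any prefix `X₀, …, X_{i-1}`, the
variable `X i` lands in `S` with probability at most `m = D(S) + γ`, so the products
`∏ᵢ exp (l (1[X i ∈ S] - m))` have expectation at most `exp (l²)ⁿ` (condition on the prefix one
step at a time), and the exponential Markov inequality with `l = (ε - γ) / 2` bounds the probability
that the empirical mass of `S` exceeds `n (D(S) + ε)` by `exp (-n (ε - γ)² / 4)`. If the empirical
distribution is `ε`-far from `D`, this happens for `S = T ∪ (supp D)ᶜ`, where `T` is the part of the
support on which the empirical distribution exceeds `D`; a union bound over the at most `2 ^ r`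
choices of `T` finishes the proof. -/

open Finset

/-- Probability of an event `E` on a finite probability space with mass function `μ`. -/
noncomputable def prE {Ω : Type*} [Fintype Ω] (μ : Ω → ℝ) (E : Ω → Prop) : ℝ :=
  ∑ ω, Set.indicator {ω' | E ω'} μ ω

section prE

variable {Ω : Type*} [Fintype Ω] {μ : Ω → ℝ}

lemma prE_eq_sum_filter (μ : Ω → ℝ) (E : Ω → Prop) [DecidablePred E] :
    prE μ E = ∑ ω ∈ univ.filter E, μ ω := by
  rw [prE, sum_filter]
  exact sum_congr rfl fun ω _ => Set.indicator_apply _ _ _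

lemma prE_nonneg (hμ : ∀ ω, 0 ≤ μ ω) (E : Ω → Prop) : 0 ≤ prE μ E := by
  classical
  rw [prE_eq_sum_filter]
  exact sum_nonneg fun ω _ => hμ ω

lemma prE_mono (hμ : ∀ ω, 0 ≤ μ ω) {E F : Ω → Prop} (h : ∀ ω, E ω → F ω) :
    prE μ E ≤ prE μ F := by
  classical
  rw [prE_eq_sum_filter, prE_eq_sum_filter]
  exact sum_le_sum_of_subset_of_nonneg (monotone_filter_right _ fun ω _ => h ω) fun ω _ _ => hμ ω

lemma prE_eq_one_sub_prE_not (hμ1 : ∑ ω, μ ω = 1) (E : Ω → Prop) :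
    prE μ E = 1 - prE μ (fun ω => ¬ E ω) := by
  classical
  rw [prE_eq_sum_filter, prE_eq_sum_filter, ← hμ1, ← sum_filter_add_sum_filter_not univ E]
  ring

lemma prE_exists_le_sum (hμ : ∀ ω, 0 ≤ μ ω) {ι : Type*} (s : Finset ι) (E : ι → Ω → Prop) :
    prE μ (fun ω => ∃ i ∈ s, E i ω) ≤ ∑ i ∈ s, prE μ (E i) := by
  have hind : ∀ i, ∀ ω, 0 ≤ Set.indicator {ω' | E i ω'} μ ω :=
    fun i => Set.indicator_nonneg fun ω _ => hμ ω
  unfold prE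
  rw [sum_comm]
  refine sum_le_sum fun ω _ => ?_
  by_cases h : ∃ i ∈ s, E i ω
  · obtain ⟨i, hi, hE⟩ := h
    rw [Set.indicator_of_mem (show ω ∈ {ω' | ∃ i ∈ s, E i ω'} from ⟨i, hi, hE⟩)]
    calc μ ω = Set.indicator {ω' | E i ω'} μ ω := (Set.indicator_of_mem hE μ).symm
      _ ≤ _ := single_le_sum (fun j _ => hind j ω) hi
  · rw [Set.indicator_of_notMem (show ω ∉ {ω' | ∃ i ∈ s, E i ω'} from h)]
    exact sum_nonneg fun i _ => hind i ω

lemma sum_prE_eq_and {σ : Type*} [DecidableEq σ] (Y : Ω → σ) (S : Finset σ) (E : Ω → Prop) :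
    ∑ a ∈ S, prE μ (fun ω => Y ω = a ∧ E ω) = prE μ (fun ω => Y ω ∈ S ∧ E ω) := by
  classical
  simp only [prE_eq_sum_filter]
  simpa only [filter_filter, and_comm] using sum_fiberwise_eq_sum_filter (univ.filter E) S Y μ

lemma prE_le_sum_mul_exp (hμ : ∀ ω, 0 ≤ μ ω) (W : Ω → ℝ) (c : ℝ) {l : ℝ} (hl : 0 ≤ l) :
    prE μ (fun ω => c ≤ W ω) ≤ ∑ ω, μ ω * Real.exp (l * (W ω - c)) := by
  classical
  rw [prE_eq_sum_filter]
  calc ∑ ω ∈ univ.filter (fun ω => c ≤ W ω), μ ω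
      ≤ ∑ ω ∈ univ.filter (fun ω => c ≤ W ω), μ ω * Real.exp (l * (W ω - c)) := by
        refine sum_le_sum fun ω hω => le_mul_of_one_le_right (hμ ω) (Real.one_le_exp ?_)
        exact mul_nonneg hl (sub_nonneg.2 (mem_filter.1 hω).2)
    _ ≤ ∑ ω, μ ω * Real.exp (l * (W ω - c)) :=
        sum_le_univ_sum_of_nonneg fun ω => mul_nonneg (hμ ω) (Real.exp_pos _).le

end prE

section statDist

variable {α : Type*} [Fintype α] {P Q : α → ℝ}

lemma statDist_eq_sum_max (h : ∑ a, P a = ∑ a, Q a) :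
    statDist P Q = ∑ a, max (P a - Q a) 0 := by
  have habs : ∀ x : ℝ, |x| = 2 * max x 0 - x := fun x => by
    rcases le_total x 0 with hx | hx
    · rw [abs_of_nonpos hx, max_eq_right hx]; ring
    · rw [abs_of_nonneg hx, max_eq_left hx]; ring
  have hdiff : ∑ a, (P a - Q a) = 0 := by rw [sum_sub_distrib, h, sub_self]
  rw [statDist, sum_congr rfl fun a _ => habs (P a - Q a), sum_sub_distrib, hdiff, ← mul_sum]
  ring

lemma sum_sub_le_statDist (h : ∑ a, P a = ∑ a, Q a) (S : Finset α) :
    ∑ a ∈ S, (P a - Q a) ≤ statDist P Q := by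
  rw [statDist_eq_sum_max h]
  exact (sum_le_sum fun a _ => le_max_left _ _).trans
    (sum_le_univ_sum_of_nonneg fun a => le_max_right _ _)

lemma statDist_le_sum (hP : ∀ a, 0 ≤ P a) (hQ : ∀ a, 0 ≤ Q a) (h : ∑ a, P a = ∑ a, Q a) :
    statDist P Q ≤ ∑ a, P a := by
  rw [statDist_eq_sum_max h]
  exact sum_le_sum fun a _ => max_le (by linarith [hQ a]) (hP a)

lemma exists_subset_support_statDist_eq [DecidableEq α] (hP : ∀ a, 0 ≤ P a)
    (h : ∑ a, P a = ∑ a, Q a) :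
    ∃ T ⊆ univ.filter (fun a => Q a ≠ 0),
      statDist P Q = ∑ a ∈ T ∪ (univ.filter (fun a => Q a ≠ 0))ᶜ, (P a - Q a) := by
  set supp := univ.filter (fun a => Q a ≠ 0)
  refine ⟨supp.filter (fun a => Q a < P a), filter_subset _ _, ?_⟩
  rw [statDist_eq_sum_max h, ← sum_subset (subset_univ _)]
  · refine sum_congr rfl fun a ha => max_eq_left ?_
    rcases mem_union.1 ha with ha | ha
    · exact (sub_pos.2 (mem_filter.1 ha).2).le
    · have : Q a = 0 := by simpa [supp] using ha
      rw [this, sub_zero]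
      exact hP a
  · intro a _ ha
    simp only [supp, mem_union, mem_filter, mem_compl, mem_univ, true_and, not_or, not_and,
      not_not] at ha
    exact max_eq_right (sub_nonpos.2 (not_lt.1 (ha.1 ha.2)))

end statDist

lemma bernoulli_mul_exp_le {p m l : ℝ} (hp0 : 0 ≤ p) (hp1 : p ≤ 1) (hpm : p ≤ m)
    (hl0 : 0 ≤ l) (hl1 : l ≤ 1) :
    p * Real.exp (l * (1 - m)) + (1 - p) * Real.exp (l * (0 - m)) ≤ Real.exp (l ^ 2) := by
  have hsplit : p * Real.exp (l * (1 - m)) + (1 - p) * Real.exp (l * (0 - m))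
      = Real.exp (-(l * m)) * (p * (Real.exp l - 1) + 1) := by
    rw [mul_sub, mul_one, Real.exp_sub, zero_sub, mul_neg, Real.exp_neg]
    field_simp
    ring
  have hquad : Real.exp l - 1 - l ≤ l ^ 2 :=
    (le_abs_self _).trans (Real.abs_exp_sub_one_sub_id_le (abs_le.2 ⟨by linarith, hl1⟩))
  have hlin : 0 ≤ Real.exp l - 1 - l := by linarith [Real.add_one_le_exp l]
  rw [hsplit]
  calc Real.exp (-(l * m)) * (p * (Real.exp l - 1) + 1)
      ≤ Real.exp (-(l * m)) * Real.exp (p * (Real.exp l - 1)) :=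
        mul_le_mul_of_nonneg_left (Real.add_one_le_exp _) (Real.exp_pos _).le
    _ ≤ Real.exp (l ^ 2) := by
        rw [← Real.exp_add]
        exact Real.exp_le_exp.2 (by nlinarith [mul_le_mul_of_nonneg_left hpm hl0])

lemma mul_exp_add_sub_mul_exp_le {p P m l : ℝ} (hp0 : 0 ≤ p) (hpP : p ≤ P) (hpm : p ≤ m * P)
    (hl0 : 0 ≤ l) (hl1 : l ≤ 1) :
    p * Real.exp (l * (1 - m)) + (P - p) * Real.exp (l * (0 - m)) ≤ P * Real.exp (l ^ 2) := by
  rcases (hp0.trans hpP).eq_or_lt with hP | hP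
  · obtain rfl : p = 0 := le_antisymm (hP ▸ hpP) hp0
    simp [← hP]
  · have h := bernoulli_mul_exp_le (div_nonneg hp0 hP.le) ((div_le_one hP).2 hpP)
      ((div_le_iff₀ hP).2 hpm) hl0 hl1
    calc p * Real.exp (l * (1 - m)) + (P - p) * Real.exp (l * (0 - m))
        = P * (p / P * Real.exp (l * (1 - m)) + (1 - p / P) * Real.exp (l * (0 - m))) := by
          field_simp
      _ ≤ P * Real.exp (l ^ 2) := mul_le_mul_of_nonneg_left h hP.le

lemma sum_mul_mul_le_of_fiber_le {Ω β : Type*} [Fintype Ω] [DecidableEq β] {μ g F : Ω → ℝ}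
    {B : ℝ} (π : Ω → β) (hF : ∀ ω, 0 ≤ F ω) (hFπ : ∀ ω ω', π ω = π ω' → F ω = F ω')
    (hfiber : ∀ ω₀, ∑ ω ∈ univ.filter (fun ω => π ω = π ω₀), μ ω * g ω
      ≤ B * ∑ ω ∈ univ.filter (fun ω => π ω = π ω₀), μ ω) :
    ∑ ω, μ ω * (g ω * F ω) ≤ B * ∑ ω, μ ω * F ω := by
  have hmaps : ∀ ω ∈ (univ : Finset Ω), π ω ∈ univ.image π :=
    fun ω _ => mem_image_of_mem π (mem_univ ω)
  rw [← sum_fiberwise_of_maps_to hmaps, ← sum_fiberwise_of_maps_to hmaps, mul_sum]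
  refine sum_le_sum fun b hb => ?_
  obtain ⟨ω₀, -, rfl⟩ := mem_image.1 hb
  have hconst : ∀ ω ∈ univ.filter (fun ω => π ω = π ω₀), F ω = F ω₀ :=
    fun ω hω => hFπ ω ω₀ (mem_filter.1 hω).2
  calc ∑ ω ∈ univ.filter (fun ω => π ω = π ω₀), μ ω * (g ω * F ω)
      = F ω₀ * ∑ ω ∈ univ.filter (fun ω => π ω = π ω₀), μ ω * g ω := by
        rw [mul_sum]
        exact sum_congr rfl fun ω hω => by rw [hconst ω hω]; ring
    _ ≤ F ω₀ * (B * ∑ ω ∈ univ.filter (fun ω => π ω = π ω₀), μ ω) :=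
        mul_le_mul_of_nonneg_left (hfiber ω₀) (hF ω₀)
    _ = B * ∑ ω ∈ univ.filter (fun ω => π ω = π ω₀), μ ω * F ω := by
        rw [mul_sum, mul_sum, mul_sum]
        exact sum_congr rfl fun ω hω => by rw [hconst ω hω]; ring

lemma sum_filter_mul_exp_le {Ω : Type*} [Fintype Ω] {μ : Ω → ℝ} {m l : ℝ} (hμ : ∀ ω, 0 ≤ μ ω)
    (hl0 : 0 ≤ l) (hl1 : l ≤ 1) {A E : Ω → Prop} [DecidablePred A] [DecidablePred E]
    (h : prE μ (fun ω => A ω ∧ E ω) ≤ m * prE μ E) :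
    ∑ ω ∈ univ.filter E, μ ω * Real.exp (l * ((if A ω then 1 else 0) - m))
      ≤ prE μ E * Real.exp (l ^ 2) := by
  have hAE : prE μ (fun ω => A ω ∧ E ω) = ∑ ω ∈ (univ.filter E).filter A, μ ω := by
    rw [prE_eq_sum_filter, filter_filter]
    simp only [and_comm]
  have hE : prE μ E - prE μ (fun ω => A ω ∧ E ω) = ∑ ω ∈ (univ.filter E).filter (¬ A ·), μ ω := by
    rw [hAE, prE_eq_sum_filter, ← sum_filter_add_sum_filter_not (univ.filter E) A,
      add_sub_cancel_left]
  rw [← sum_filter_add_sum_filter_not (univ.filter E) A]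
  calc ∑ ω ∈ (univ.filter E).filter A, μ ω * Real.exp (l * ((if A ω then 1 else 0) - m))
        + ∑ ω ∈ (univ.filter E).filter (¬ A ·), μ ω * Real.exp (l * ((if A ω then 1 else 0) - m))
      = prE μ (fun ω => A ω ∧ E ω) * Real.exp (l * (1 - m))
        + (prE μ E - prE μ (fun ω => A ω ∧ E ω)) * Real.exp (l * (0 - m)) := by
        rw [hE, hAE, sum_mul, sum_mul]
        congr 1 <;> refine sum_congr rfl fun ω hω => ?_
        · rw [if_pos (mem_filter.1 hω).2]
        · rw [if_neg (mem_filter.1 hω).2]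
    _ ≤ prE μ E * Real.exp (l ^ 2) :=
        mul_exp_add_sub_mul_exp_le (prE_nonneg hμ _) (prE_mono hμ fun _ h => h.2) h hl0 hl1

section Chernoff

variable {Ω σ : Type*} [Fintype Ω] [DecidableEq σ] {μ : Ω → ℝ} {n : ℕ} {X : Fin n → Ω → σ}
  {S : Finset σ} {m : ℝ}

lemma sum_mul_prod_exp_le (hμ : ∀ ω, 0 ≤ μ ω) (hμ1 : ∑ ω, μ ω = 1) {l : ℝ} (hl0 : 0 ≤ l)
    (hl1 : l ≤ 1)
    (hcond : ∀ i (v : Fin n → σ), prE μ (fun ω => X i ω ∈ S ∧ ∀ j, j < i → X j ω = v j)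
      ≤ m * prE μ (fun ω => ∀ j, j < i → X j ω = v j)) :
    ∀ k ≤ n, ∑ ω, μ ω * ∏ j ∈ univ.filter (fun j : Fin n => (j : ℕ) < k),
      Real.exp (l * ((if X j ω ∈ S then 1 else 0) - m)) ≤ Real.exp (l ^ 2) ^ k := by
  classical
  intro k
  induction k with
  | zero => intro _; simp [hμ1]
  | succ k ih =>
    intro hk
    set i : Fin n := ⟨k, hk⟩
    have hinsert : univ.filter (fun j : Fin n => (j : ℕ) < k + 1)
        = insert i (univ.filter fun j : Fin n => (j : ℕ) < k) := by
      ext j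
      simp only [mem_filter, mem_univ, true_and, mem_insert, i, Fin.ext_iff]
      omega
    have hi : i ∉ univ.filter fun j : Fin n => (j : ℕ) < k := by simp [i]
    rw [sum_congr rfl fun ω _ => by rw [hinsert, prod_insert hi], pow_succ']
    refine (sum_mul_mul_le_of_fiber_le (fun ω (j : Fin n) (_ : j < i) => X j ω) ?_ ?_ ?_).trans
      (mul_le_mul_of_nonneg_left (ih (Nat.le_of_succ_le hk)) (Real.exp_pos _).le)
    · exact fun ω => prod_nonneg fun j _ => (Real.exp_pos _).le
    · intro ω ω' h
      refine prod_congr rfl fun j hj => ?_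
      rw [congrFun (congrFun h j) (mem_filter.1 hj).2]
    · -- `π ω` records the prefix `X j ω`, `j < i`; its fibres are the prefix events of `hcond`.
      intro ω₀
      have hfiber : univ.filter (fun ω => (fun (j : Fin n) (_ : j < i) => X j ω)
          = fun (j : Fin n) (_ : j < i) => X j ω₀)
          = univ.filter (fun ω => ∀ j, j < i → X j ω = X j ω₀) := by
        ext ω
        simp only [mem_filter, mem_univ, true_and, funext_iff]
      rw [hfiber, ← prE_eq_sum_filter μ, mul_comm]
      exact sum_filter_mul_exp_le hμ hl0 hl1 (hcond i fun j => X j ω₀)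

theorem prE_le_card_filter_mem_le (hμ : ∀ ω, 0 ≤ μ ω) (hμ1 : ∑ ω, μ ω = 1)
    (hcond : ∀ i (v : Fin n → σ), prE μ (fun ω => X i ω ∈ S ∧ ∀ j, j < i → X j ω = v j)
      ≤ m * prE μ (fun ω => ∀ j, j < i → X j ω = v j))
    {t : ℝ} (ht0 : 0 < t) (ht2 : t ≤ 2) :
    prE μ (fun ω => n * (m + t) ≤ #{i | X i ω ∈ S}) ≤ Real.exp (-(n * t ^ 2 / 4)) := by
  classical
  have hl0 : 0 ≤ t / 2 := by linarith
  have hl1 : t / 2 ≤ 1 := by linarith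
  have hexp : ∀ ω, Real.exp (t / 2 * (#{i | X i ω ∈ S} - n * (m + t)))
      = Real.exp (-(t / 2 * n * t)) * ∏ j ∈ univ.filter (fun j : Fin n => (j : ℕ) < n),
        Real.exp (t / 2 * ((if X j ω ∈ S then 1 else 0) - m)) := by
    intro ω
    have huniv : univ.filter (fun j : Fin n => (j : ℕ) < n) = univ :=
      filter_true_of_mem fun j _ => j.is_lt
    rw [huniv, ← Real.exp_sum, ← Real.exp_add]
    congr 1
    simp only [← mul_sum, sum_sub_distrib, sum_boole, sum_const, card_univ, Fintype.card_fin,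
      nsmul_eq_mul]
    ring
  calc prE μ (fun ω => n * (m + t) ≤ #{i | X i ω ∈ S})
      ≤ ∑ ω, μ ω * Real.exp (t / 2 * (#{i | X i ω ∈ S} - n * (m + t))) :=
        prE_le_sum_mul_exp hμ _ _ hl0
    _ = Real.exp (-(t / 2 * n * t)) * ∑ ω, μ ω *
          ∏ j ∈ univ.filter (fun j : Fin n => (j : ℕ) < n),
            Real.exp (t / 2 * ((if X j ω ∈ S then 1 else 0) - m)) := by
        rw [mul_sum]
        exact sum_congr rfl fun ω _ => by rw [hexp]; ring
    _ ≤ Real.exp (-(t / 2 * n * t)) * Real.exp ((t / 2) ^ 2) ^ n :=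
        mul_le_mul_of_nonneg_left (sum_mul_prod_exp_le hμ hμ1 hl0 hl1 hcond n le_rfl)
          (Real.exp_pos _).le
    _ = Real.exp (-(n * t ^ 2 / 4)) := by
        rw [← Real.exp_nat_mul, ← Real.exp_add]
        ring_nf

end Chernoff

lemma prE_mem_and_le_of_statDist_le {Ω σ : Type*} [Fintype Ω] [Fintype σ] [DecidableEq σ]
    {μ : Ω → ℝ} (hμ : ∀ ω, 0 ≤ μ ω) {D : σ → ℝ} (hD1 : ∑ a, D a = 1) {Y : Ω → σ}
    {E : Ω → Prop} {γ : ℝ}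
    (h : 0 < prE μ E → statDist (fun a => prE μ (fun ω => Y ω = a ∧ E ω) / prE μ E) D ≤ γ)
    (S : Finset σ) :
    prE μ (fun ω => Y ω ∈ S ∧ E ω) ≤ (∑ a ∈ S, D a + γ) * prE μ E := by
  rcases (prE_nonneg hμ E).eq_or_lt with h0 | hpos
  · rw [← h0, mul_zero]
    exact (prE_mono hμ fun _ h => h.2).trans h0.ge
  · have hsum : ∑ a, prE μ (fun ω => Y ω = a ∧ E ω) / prE μ E = ∑ a, D a := by
      rw [← sum_div, sum_prE_eq_and, hD1]
      simp only [mem_univ, true_and]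
      exact div_self hpos.ne'
    have hS := (sum_sub_le_statDist hsum S).trans (h hpos)
    rw [sum_sub_distrib, ← sum_div, sum_prE_eq_and] at hS
    rw [← div_le_iff₀ hpos]
    linarith

lemma two_pow_mul_exp_le {r n : ℕ} {η t : ℝ} (hη0 : 0 < η) (hη1 : η < 1) (ht : 0 < t)
    (hn : 4 * ((r + 2 + Real.logb 2 (1 / η)) / t ^ 2) ≤ n) :
    2 ^ r * Real.exp (-(n * t ^ 2 / 4)) ≤ η := by
  have hlog2 : 0 < Real.log 2 := Real.log_pos one_lt_two
  have hlog2' : Real.log 2 < 1 := by linarith [Real.log_two_lt_d9]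
  have hlogη : 0 ≤ Real.log (1 / η) := Real.log_nonneg (by rw [le_div_iff₀ hη0]; linarith)
  have hlogb : Real.log (1 / η) ≤ Real.logb 2 (1 / η) := by
    rw [Real.logb, le_div_iff₀ hlog2]
    nlinarith
  have hn' : r + 2 + Real.logb 2 (1 / η) ≤ n * t ^ 2 / 4 := by
    rw [mul_div_assoc', div_le_iff₀ (by positivity)] at hn
    linarith
  have hr : (r : ℝ) * Real.log 2 ≤ r := by nlinarith [(Nat.cast_nonneg r : (0 : ℝ) ≤ r)]
  calc 2 ^ r * Real.exp (-(n * t ^ 2 / 4))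
      = Real.exp (r * Real.log 2 - n * t ^ 2 / 4) := by
        rw [Real.exp_sub, Real.exp_nat_mul, Real.exp_log two_pos, Real.exp_neg, ← div_eq_mul_inv]
    _ ≤ Real.exp (Real.log η) := by
        have hinv : Real.log (1 / η) = -Real.log η := by rw [one_div, Real.log_inv]
        exact Real.exp_le_exp.2 (by linarith)
    _ = η := Real.exp_log hη0

noncomputable def empirical {σ : Type*} [DecidableEq σ] {n : ℕ} (x : Fin n → σ) (a : σ) : ℝ :=
  (#{i | x i = a} : ℝ) / n

section empirical

variable {σ : Type*} [DecidableEq σ] {n : ℕ} (x : Fin n → σ)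

lemma empirical_nonneg (a : σ) : 0 ≤ empirical x a := by
  unfold empirical
  positivity

lemma sum_empirical (S : Finset σ) : ∑ a ∈ S, empirical x a = #{i | x i ∈ S} / n := by
  simp only [empirical, ← sum_div, ← Nat.cast_sum, sum_card_fiberwise_eq_card_filter]

lemma sum_empirical_univ [Fintype σ] (hn : 0 < n) : ∑ a, empirical x a = 1 := by
  rw [sum_empirical, filter_true_of_mem fun i _ => mem_univ _, card_univ, Fintype.card_fin]
  exact div_self (Nat.cast_pos.2 hn : (0 : ℝ) < n).ne'

lemma exists_lt_card_filter_mem_of_lt_statDist [Fintype σ] {D : σ → ℝ} (hD1 : ∑ a, D a = 1)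
    (hn : 0 < n) {ε : ℝ} (h : ε < statDist (empirical x) D) :
    ∃ T ⊆ univ.filter (fun a => D a ≠ 0),
      n * (∑ a ∈ T ∪ (univ.filter (fun a => D a ≠ 0))ᶜ, D a + ε)
        < #{i | x i ∈ T ∪ (univ.filter (fun a => D a ≠ 0))ᶜ} := by
  obtain ⟨T, hT, heq⟩ := exists_subset_support_statDist_eq (Q := D) (empirical_nonneg x)
    (by rw [sum_empirical_univ x hn, hD1])
  refine ⟨T, hT, ?_⟩
  rw [heq, sum_sub_distrib, sum_empirical, lt_sub_iff_add_lt, add_comm,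
    lt_div_iff₀ (Nat.cast_pos.2 hn)] at h
  linarith

end empirical

theorem prE_lt_statDist_empirical_le {Ω σ : Type*} [Fintype Ω] [Fintype σ] [DecidableEq σ]
    {μ : Ω → ℝ} (hμ : ∀ ω, 0 ≤ μ ω) (hμ1 : ∑ ω, μ ω = 1) {D : σ → ℝ} (hD0 : ∀ a, 0 ≤ D a)
    (hD1 : ∑ a, D a = 1) {n : ℕ} (hn : 0 < n) {X : Fin n → Ω → σ} {γ ε : ℝ} (hγ : 0 ≤ γ)
    (hγε : γ < ε)
    (hX : ∀ i (v : Fin n → σ), 0 < prE μ (fun ω => ∀ j, j < i → X j ω = v j) →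
      statDist (fun a => prE μ (fun ω => X i ω = a ∧ ∀ j, j < i → X j ω = v j) /
        prE μ (fun ω => ∀ j, j < i → X j ω = v j)) D ≤ γ) :
    prE μ (fun ω => ε < statDist (empirical fun i => X i ω) D)
      ≤ 2 ^ #{a | D a ≠ 0} * Real.exp (-(n * (ε - γ) ^ 2 / 4)) := by
  rcases le_or_gt ε 1 with hε1 | hε1
  swap
  · have hnever : ∀ ω, ¬ ε < statDist (empirical fun i => X i ω) D := fun ω => by
      have h := statDist_le_sum (empirical_nonneg fun i => X i ω) hD0
        (by rw [sum_empirical_univ _ hn, hD1])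
      rw [sum_empirical_univ _ hn] at h
      linarith
    rw [prE_eq_sum_filter, filter_false_of_mem fun ω _ => hnever ω, sum_empty]
    positivity
  set supp := univ.filter (fun a => D a ≠ 0)
  calc prE μ (fun ω => ε < statDist (empirical fun i => X i ω) D)
      ≤ ∑ T ∈ supp.powerset, prE μ (fun ω => n * ((∑ a ∈ T ∪ suppᶜ, D a + γ) + (ε - γ))
          ≤ #{i | X i ω ∈ T ∪ suppᶜ}) := by
        refine (prE_mono hμ fun ω h => ?_).trans (prE_exists_le_sum hμ _ _)
        obtain ⟨T, hT, hlt⟩ := exists_lt_card_filter_mem_of_lt_statDist _ hD1 hn h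
        exact ⟨T, mem_powerset.2 hT, by linarith⟩
    _ ≤ ∑ T ∈ supp.powerset, Real.exp (-(n * (ε - γ) ^ 2 / 4)) := sum_le_sum fun T _ =>
        prE_le_card_filter_mem_le hμ hμ1
          (fun i v => prE_mem_and_le_of_statDist_le hμ hD1 (hX i v) _) (sub_pos.2 hγε)
          (by linarith)
    _ = 2 ^ #supp * Real.exp (-(n * (ε - γ) ^ 2 / 4)) := by
        rw [sum_const, card_powerset, nsmul_eq_mul, Nat.cast_pow, Nat.cast_ofNat]

/-- There is an absolute constant `C` such that the following
holds. Let `D` be a distribution over a finite set `σ` with `|supp(D)| ≤ r`, let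
`η, ε, γ > 0` with `γ < ε`, and let `n ≥ C·(r + 2 + log(1/η))/(ε − γ)²`. If
`X₁, …, Xₙ ∈ σ` are possibly correlated random variables such that, conditioned on
any realization of the preceding variables of positive probability, the
conditional distribution of `Xᵢ` is within statistical distance `γ` of `D`, then
with probability at least `1 − η` the empirical distribution of `X₁, …, Xₙ` is
within statistical distance `ε` of `D`. -/
theorem empirical_distribution_of_fuzzy_samples :
    ∃ C : ℝ, 0 < C ∧
    ∀ (σ : Type) [Fintype σ] [DecidableEq σ],
    ∀ D : σ → ℝ, (∀ a, 0 ≤ D a) → (∑ a, D a) = 1 →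
    ∀ r : ℕ, (univ.filter (fun a => D a ≠ 0)).card ≤ r →
    ∀ η ε γ : ℝ, 0 < η → 0 < ε → 0 < γ → γ < ε →
    ∀ n : ℕ, C * (((r : ℝ) + 2 + Real.logb 2 (1/η)) / (ε - γ) ^ 2) ≤ (n : ℝ) →
    ∀ (Ω : Type) [Fintype Ω],
    ∀ μ : Ω → ℝ, (∀ ω, 0 ≤ μ ω) → (∑ ω, μ ω) = 1 →
    ∀ X : Fin n → Ω → σ,
    (∀ i : Fin n, ∀ v : Fin n → σ,
      0 < prE μ (fun ω => ∀ j, j < i → X j ω = v j) →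
      statDist (fun a => prE μ (fun ω => X i ω = a ∧ ∀ j, j < i → X j ω = v j) /
        prE μ (fun ω => ∀ j, j < i → X j ω = v j)) D ≤ γ) →
    1 - η ≤ prE μ (fun ω =>
      statDist (fun a => ((univ.filter (fun i : Fin n => X i ω = a)).card : ℝ) / (n : ℝ))
        D ≤ ε) := by
  refine ⟨4, four_pos, ?_⟩
  intro σ _ _ D hD0 hD1 r hr η ε γ hη _ hγ hγε n hn Ω _ μ hμ0 hμ1 X hX
  change 1 - η ≤ prE μ (fun ω => statDist (empirical fun i => X i ω) D ≤ ε)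
  rcases le_or_gt 1 η with hη1 | hη1
  · exact (sub_nonpos.2 hη1).trans (prE_nonneg hμ0 _)
  have hn0 : 0 < n := by
    have hL : 0 ≤ Real.logb 2 (1 / η) :=
      Real.logb_nonneg one_lt_two (by rw [le_div_iff₀ hη]; linarith)
    have : (0 : ℝ) < 4 * ((r + 2 + Real.logb 2 (1 / η)) / (ε - γ) ^ 2) :=
      mul_pos four_pos (div_pos (by positivity) (pow_pos (sub_pos.2 hγε) 2))
    exact_mod_cast this.trans_le hn
  have hfail := prE_lt_statDist_empirical_le hμ0 hμ1 hD0 hD1 hn0 hγ.le hγε hX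
  have hsupp : (2 : ℝ) ^ #{a | D a ≠ 0} ≤ 2 ^ r := pow_le_pow_right₀ one_le_two hr
  rw [prE_eq_one_sub_prE_not hμ1]
  simp only [not_le]
  linarith [mul_le_mul_of_nonneg_right hsupp (Real.exp_pos (-(n * (ε - γ) ^ 2 / 4))).le,
    two_pow_mul_exp_le hη hη1 (sub_pos.2 hγε) hn]
end
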